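/- arXiv:cs/0203030 — 7 statements merged into one kernel-verified Lean document; each statement's English description precedes it below -/
import Mathlib

section
/- Let m ≥ 1 and 0 < r < R < 1, and set μ = (1/m)·(1 - (r/R)^{1/3}). Then (r/R) · (mμ) / (ln(1+mμ) · (1-rμ)²) ≤ (r/R) · (1-mμ)^{-3} = 1. -/
/-!
Write `x = mμ = 1 - ρ` with `ρ = (r/R)^{1/3}`, so that `(r/R)(1 - x)⁻³ = ρ³ ρ⁻³ = 1`.
For the inequality, `ln(1 + x) ≥ x/(1 + x)` and `(1 - rμ)² ≥ (1 - x)²` (as `rμ ≤ x`) bound the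
left-hand side by `(1 + x)/(1 - x)²`, which is at most `(1 - x)⁻³` because `(1 + x)(1 - x) ≤ 1`.
-/

open Real

lemma div_log_one_add_le_one_add {x : ℝ} (hx : 0 < x) : x / log (1 + x) ≤ 1 + x := by
  have hlog : x / (1 + x) ≤ log (1 + x) := by
    have h := one_sub_inv_le_log_of_pos (show 0 < 1 + x by linarith)
    rwa [show 1 - (1 + x)⁻¹ = x / (1 + x) by field_simp; ring] at h
  rw [div_le_iff₀ (log_pos (by linarith)), mul_comm]
  rwa [div_le_iff₀ (by linarith)] at hlog

lemma one_add_div_sq_le_inv_pow_three {x : ℝ} (hx1 : x < 1) :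
    (1 + x) / (1 - x) ^ 2 ≤ (1 - x)⁻¹ ^ 3 := by
  have h : 0 < 1 - x := by linarith
  rw [inv_pow, ← one_div, div_le_div_iff₀ (by positivity) (by positivity)]
  nlinarith [sq_nonneg x, mul_nonneg (sq_nonneg x) (sq_nonneg (1 - x))]

lemma div_log_one_add_mul_sq_le {x s : ℝ} (hx0 : 0 < x) (hx1 : x < 1) (hsx : s ≤ x) :
    x / (log (1 + x) * (1 - s) ^ 2) ≤ (1 - x)⁻¹ ^ 3 :=
  calc x / (log (1 + x) * (1 - s) ^ 2) = x / log (1 + x) / (1 - s) ^ 2 := by rw [div_div]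
    _ ≤ (1 + x) / (1 - x) ^ 2 := by gcongr; exact div_log_one_add_le_one_add hx0
    _ ≤ (1 - x)⁻¹ ^ 3 := one_add_div_sq_le_inv_pow_three hx1

theorem stmt_3 (m : ℕ) (hm : 1 ≤ m) (r R : ℝ) (hr : 0 < r) (hrR : r < R) (hR : R < 1)
    (μ : ℝ) (hμ : μ = (1 / (m : ℝ)) * (1 - (r / R) ^ ((1 : ℝ) / 3))) :
    r / R * ((m * μ) / (Real.log (1 + m * μ) * (1 - r * μ) ^ 2)) ≤
        r / R * (1 - m * μ)⁻¹ ^ 3 ∧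
      r / R * (1 - m * μ)⁻¹ ^ 3 = 1 := by
  have hm1 : (1 : ℝ) ≤ m := by exact_mod_cast hm
  have hq0 : 0 < r / R := div_pos hr (hr.trans hrR)
  have hq1 : r / R < 1 := (div_lt_one (hr.trans hrR)).mpr hrR
  set ρ := (r / R) ^ ((1 : ℝ) / 3)
  have hρ0 : 0 < ρ := rpow_pos_of_pos hq0 _
  have hρ1 : ρ < 1 := rpow_lt_one hq0.le hq1 (by norm_num)
  have hρ3 : ρ ^ 3 = r / R := by
    simpa [ρ, one_div] using rpow_inv_natCast_pow (n := 3) hq0.le (by norm_num)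
  have hx : (m : ℝ) * μ = 1 - ρ := by rw [hμ]; field_simp
  have hμ0 : 0 < μ := pos_of_mul_pos_right (hx ▸ sub_pos.mpr hρ1) (by positivity)
  have hrm : r * μ ≤ m * μ := by gcongr; linarith
  refine ⟨?_, ?_⟩
  · gcongr
    exact div_log_one_add_mul_sq_le (by linarith) (by linarith) hrm
  · rw [hx, sub_sub_cancel, ← hρ3, inv_pow]
    exact mul_inv_cancel₀ (by positivity)
end

section
/- Suppose D : ℕ → ℝ satisfies D 0 = m·δ and D i ≤ D (i-1) / (1 - rμ) for 1 ≤ i ≤ t, where m ≥ 1, 0 < rμ < 1, δ = ((1-rμ)/m)^{1/(rμ)}, and t = ⌊((1-rμ)/(rμ))·ln((1-rμ)/(mδ))⌋ + 1. Then D t ≤ 1. -/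
/-!
Unrolling the recursion gives `D t ≤ m δ / (1 - rμ)^t`, so it suffices that `m δ ≤ (1 - rμ)^t`.
Since `1/(1 - rμ) = 1 + rμ/(1 - rμ) ≤ exp (rμ/(1 - rμ))`, each factor `1 - rμ` costs at most
`rμ/(1 - rμ)` in logarithm, and `t - 1` is exactly the number of factors that fit into the budget
`log ((1 - rμ)/(m δ))`, which is nonnegative because `m δ ≤ 1 - rμ` by the choice of `δ`.
-/

open Real

lemma le_div_pow_of_le_div_pred {D : ℕ → ℝ} {b : ℝ} (hb : 0 ≤ b) {t : ℕ}
    (hD : ∀ i, 1 ≤ i → i ≤ t → D i ≤ D (i - 1) / b) : ∀ i ≤ t, D i ≤ D 0 / b ^ i := by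
  intro i
  induction i with
  | zero => simp
  | succ n ih =>
    intro hn
    calc D (n + 1) ≤ D n / b := by simpa using hD (n + 1) (by omega) hn
      _ ≤ D 0 / b ^ n / b := div_le_div_of_nonneg_right (ih (by omega)) hb
      _ = D 0 / b ^ (n + 1) := by rw [div_div, pow_succ]

lemma natCast_mul_div_rpow_le (m : ℕ) {b p : ℝ} (hb0 : 0 ≤ b) (hb1 : b ≤ 1) (hp : 1 ≤ p) :
    m * (b / m) ^ p ≤ b := by
  rcases Nat.eq_zero_or_pos m with rfl | hm
  · simpa using hb0
  have hm' : (1 : ℝ) ≤ m := by exact_mod_cast hm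
  have hle : (b / m) ^ p ≤ b / m := by
    simpa using rpow_le_rpow_of_exponent_ge' (by positivity)
      ((div_le_one (by positivity)).2 (hb1.trans hm')) zero_le_one hp
  calc m * (b / m) ^ p ≤ m * (b / m) := by gcongr
    _ = b := by field_simp

lemma neg_div_one_sub_le_log_one_sub {a : ℝ} (ha : a < 1) : -(a / (1 - a)) ≤ log (1 - a) := by
  have hb : 0 < 1 - a := sub_pos.2 ha
  calc -(a / (1 - a)) = 1 - (1 - a)⁻¹ := by field_simp; ring
    _ ≤ log (1 - a) := one_sub_inv_le_log_of_pos hb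

lemma le_one_sub_pow_floor_succ {a c : ℝ} (ha0 : 0 < a) (ha1 : a < 1) (hc0 : 0 ≤ c)
    (hc : c ≤ 1 - a) : c ≤ (1 - a) ^ (⌊(1 - a) / a * log ((1 - a) / c)⌋₊ + 1) := by
  have hb : 0 < 1 - a := sub_pos.2 ha1
  rcases hc0.eq_or_lt with rfl | hc0
  · positivity
  set L := log ((1 - a) / c)
  set k := ⌊(1 - a) / a * L⌋₊
  have hL : 0 ≤ L := log_nonneg ((one_le_div hc0).2 hc)
  have hk : (k : ℝ) * (a / (1 - a)) ≤ L :=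
    calc (k : ℝ) * (a / (1 - a)) ≤ (1 - a) / a * L * (a / (1 - a)) := by
          gcongr; exact Nat.floor_le (by positivity)
      _ = L := by field_simp
  have hstep : (k : ℝ) * -(a / (1 - a)) ≤ k * log (1 - a) := by
    gcongr; exact neg_div_one_sub_le_log_one_sub ha1
  have hL_eq : L = log (1 - a) - log c := log_div hb.ne' hc0.ne'
  rw [← log_le_log_iff hc0 (by positivity), log_pow]
  push_cast
  linarith

theorem stmt_4_general (m : ℕ) (r μ δ : ℝ) (t : ℕ)
    (hrμ0 : 0 < r * μ) (hrμ1 : r * μ < 1)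
    (hδ : δ = ((1 - r * μ) / m) ^ ((1 : ℝ) / (r * μ)))
    (ht : t = ⌊(1 - r * μ) / (r * μ) * Real.log ((1 - r * μ) / (m * δ))⌋₊ + 1)
    (D : ℕ → ℝ)
    (hD0 : D 0 = m * δ)
    (hDrec : ∀ i, 1 ≤ i → i ≤ t → D i ≤ D (i - 1) / (1 - r * μ)) :
    D t ≤ 1 := by
  have hb : 0 < 1 - r * μ := sub_pos.2 hrμ1
  have hmδ0 : 0 ≤ m * δ := mul_nonneg m.cast_nonneg (hδ ▸ rpow_nonneg (by positivity) _)
  have hmδ : m * δ ≤ 1 - r * μ := hδ ▸ natCast_mul_div_rpow_le m hb.le (by linarith)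
    ((one_le_div hrμ0).2 hrμ1.le)
  have hpow : m * δ ≤ (1 - r * μ) ^ t := ht ▸ le_one_sub_pow_floor_succ hrμ0 hrμ1 hmδ0 hmδ
  calc D t ≤ D 0 / (1 - r * μ) ^ t := le_div_pow_of_le_div_pred hb.le hDrec t le_rfl
    _ ≤ 1 := by rw [hD0]; exact (div_le_one (by positivity)).2 hpow

theorem stmt_4 (m : ℕ) (hm : 1 ≤ m) (r μ δ : ℝ) (t : ℕ)
    (hrμ0 : 0 < r * μ) (hrμ1 : r * μ < 1)
    (hδ : δ = ((1 - r * μ) / m) ^ ((1 : ℝ) / (r * μ)))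
    (ht : t = ⌊(1 - r * μ) / (r * μ) * Real.log ((1 - r * μ) / (m * δ))⌋₊ + 1)
    (D : ℕ → ℝ)
    (hD0 : D 0 = m * δ)
    (hDrec : ∀ i, 1 ≤ i → i ≤ t → D i ≤ D (i - 1) / (1 - r * μ)) :
    D t ≤ 1 :=
  stmt_4_general m r μ δ t hrμ0 hrμ1 hδ ht D hD0 hDrec
end

section
/- Let 0 < rμ < 1, m ≥ 1, δ = ((1-rμ)/m)^{1/(rμ)}, and t = ⌊((1-rμ)/(rμ))·ln((1-rμ)/(mδ))⌋ + 1. Suppose a nonnegative function c on links starts at c(e) = δ for all e, only increases, satisfies ∑_e c(e) ≤ 1 at the end, and is multiplied by at least (1+μ) for every group of w paths routed through e. Then the total number of paths routed through any single link e during the phase is at most w · log_{1+μ}(1/δ), and moreover w·log_{1+μ}(1/δ) ≤ w·t·R whenever μ = 1-(r/R)^{1/3} with 0 < r < R < 1. -/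
/-!
Every `w` paths through a link multiply its cost by at least `1 + μ`, and the cost can grow only
from `δ` to `1`, so at most `w · log_{1+μ}(1/δ)` paths use the link. For the parameter bound write
`x = rμ` and `L = log (m / (1 - x))`: then `log (1/δ) = L / x` while `t > ((1 - x) / x)² L`, so it
suffices that `x ≤ R (1 - x)² log (1 + μ)`. Since `μ = 1 - (r/R)^{1/3}` gives `r = R (1 - μ)³`,
this follows from `log (1 + μ) ≥ μ (1 - μ)` and `1 - x ≥ 1 - μ`.
-/

open Real

lemma le_mul_logb_of_mul_rpow_le_one {δ b w N : ℝ} (hδ : 0 < δ) (hb : 1 < b) (hw : 0 < w)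
    (h : δ * b ^ (N / w) ≤ 1) : N ≤ w * logb b (1 / δ) := by
  have hN : N / w ≤ logb b (1 / δ) :=
    (le_logb_iff_rpow_le hb (one_div_pos.2 hδ)).2 (by rwa [le_div_iff₀' hδ])
  rwa [div_le_iff₀' hw] at hN

lemma mul_one_sub_le_log_one_add {μ : ℝ} (hμ : 0 ≤ μ) : μ * (1 - μ) ≤ log (1 + μ) := by
  refine le_trans ?_ (le_log_one_add_of_nonneg hμ)
  rw [le_div_iff₀ (by linarith)]
  nlinarith [pow_nonneg hμ 3]

lemma mul_le_mul_sq_mul_log_one_add {r R μ : ℝ} (hR : 0 ≤ R) (hμ0 : 0 ≤ μ) (hμ1 : μ ≤ 1)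
    (hr : r = R * (1 - μ) ^ 3) (hr1 : r ≤ 1) :
    r * μ ≤ R * (1 - r * μ) ^ 2 * log (1 + μ) := by
  have hsq : (1 - μ) ^ 2 ≤ (1 - r * μ) ^ 2 :=
    pow_le_pow_left₀ (by linarith) (by nlinarith) 2
  calc r * μ = R * (1 - μ) ^ 2 * (μ * (1 - μ)) := by rw [hr]; ring
    _ ≤ R * (1 - r * μ) ^ 2 * log (1 + μ) := by
      gcongr
      exact mul_one_sub_le_log_one_add hμ0

lemma log_div_rpow_one_div {a x : ℝ} (ha : 0 < a) (hx : x ≠ 0) :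
    log (a / a ^ (1 / x)) = (1 - x) / x * log (1 / a) := by
  rw [log_div ha.ne' (rpow_pos_of_pos ha _).ne', log_rpow ha, one_div a, log_inv]
  field_simp
  ring

lemma log_one_div_div_le_succ_floor_mul {m : ℕ} (hm : 1 ≤ m) {x R ℓ : ℝ} (hx0 : 0 < x)
    (hx1 : x < 1) (hR : 0 ≤ R) (hℓ : 0 < ℓ) (hx : x ≤ R * (1 - x) ^ 2 * ℓ) :
    log (1 / ((1 - x) / m) ^ (1 / x)) / ℓ ≤
      ((⌊(1 - x) / x * log ((1 - x) / (m * ((1 - x) / m) ^ (1 / x)))⌋₊ + 1 : ℕ) : ℝ) * R := by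
  have hm' : (1 : ℝ) ≤ m := by exact_mod_cast hm
  have ha : 0 < (1 - x) / m := div_pos (by linarith) (by linarith)
  set L := log (1 / ((1 - x) / m))
  have hL : 0 ≤ L := log_nonneg (one_le_one_div ha ((div_le_one (by linarith)).2 (by linarith)))
  have hδ : log (1 / ((1 - x) / m) ^ (1 / x)) = L / x := by
    rw [one_div (_ ^ _), log_inv, log_rpow ha]
    simp only [L, one_div, log_inv]
    ring
  have ht : ((1 - x) / x) ^ 2 * L ≤
      ((⌊(1 - x) / x * log ((1 - x) / (m * ((1 - x) / m) ^ (1 / x)))⌋₊ + 1 : ℕ) : ℝ) := by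
    rw [← div_div, log_div_rpow_one_div ha hx0.ne', Nat.cast_add_one]
    exact (le_of_eq (by ring)).trans (Nat.lt_floor_add_one _).le
  calc log (1 / ((1 - x) / m) ^ (1 / x)) / ℓ ≤ ((1 - x) / x) ^ 2 * L * R := by
        rw [hδ, div_div, div_le_iff₀ (by positivity)]
        calc L = L * 1 := (mul_one L).symm
          _ ≤ L * (R * (1 - x) ^ 2 * ℓ / x) :=
            mul_le_mul_of_nonneg_left ((one_le_div hx0).2 hx) hL
          _ = ((1 - x) / x) ^ 2 * L * R * (x * ℓ) := by field_simp
    _ ≤ _ := mul_le_mul_of_nonneg_right ht hR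

/-- The counting step of Theorem 1: if the congestion of a link starts at `δ`, ends at most `1`,
and is multiplied by at least `(1+μ)` for every group of `w` paths routed through the link, then
at most `w·log_{1+μ}(1/δ)` paths were routed through it; moreover `w·log_{1+μ}(1/δ) ≤ w·t·R`
for the protocol's choice of parameters `μ`, `δ`, `t`. -/
theorem stmt_5 (m : ℕ) (hm : 1 ≤ m) (w r R μ δ : ℝ) (t : ℕ)
    (hw : 0 < w) (hr : 0 < r) (hrR : r < R) (hR : R < 1)
    (hμ : μ = 1 - (r / R) ^ ((1 : ℝ) / 3))
    (hδ : δ = ((1 - r * μ) / m) ^ ((1 : ℝ) / (r * μ)))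
    (ht : t = ⌊(1 - r * μ) / (r * μ) * Real.log ((1 - r * μ) / (m * δ))⌋₊ + 1) :
    (∀ N : ℝ, 0 ≤ N → δ * (1 + μ) ^ (N / w) ≤ 1 →
        N ≤ w * (Real.log (1 / δ) / Real.log (1 + μ))) ∧
      w * (Real.log (1 / δ) / Real.log (1 + μ)) ≤ w * t * R := by
  have hR0 : 0 < R := hr.trans hrR
  have hc : 0 < r / R := div_pos hr hR0
  have hμ0 : 0 < μ := hμ ▸ sub_pos.2 (rpow_lt_one hc.le ((div_lt_one hR0).2 hrR) (by norm_num))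
  have hμ1 : μ < 1 := hμ ▸ sub_lt_self _ (rpow_pos_of_pos hc _)
  have hr_eq : r = R * (1 - μ) ^ 3 := by
    have hcube := rpow_inv_natCast_pow hc.le (n := 3) three_ne_zero
    push_cast at hcube
    rw [hμ, sub_sub_cancel, one_div, hcube]
    field_simp
  have hx1 : r * μ < 1 := by nlinarith
  have hδ0 : 0 < δ :=
    hδ ▸ rpow_pos_of_pos (div_pos (by linarith) (by exact_mod_cast hm)) _
  refine ⟨fun N _ hN => ?_, ?_⟩
  · simpa only [log_div_log] using le_mul_logb_of_mul_rpow_le_one hδ0 (by linarith) hw hN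
  · rw [mul_assoc]
    refine mul_le_mul_of_nonneg_left ?_ hw.le
    subst hδ ht
    exact log_one_div_div_le_succ_floor_mul hm (mul_pos hr hμ0) hx1 hR0.le
      (log_pos (by linarith))
      (mul_le_mul_sq_mul_log_one_add hR0.le hμ0.le hμ1.le hr_eq (by linarith))
end

section
/- Suppose a sequence of packets j = 1,…,N is routed, where routing packet j along path p_j updates congestion by c(e) ← c(e)(1+μ/w) for each e ∈ p_j, starting from congestion function c_{i-1} and ending at c_i. Let D_{i-1} = ∑_e c_{i-1}(e), D_i = ∑_e c_i(e), and α_i = ∑_j min_{p ∈ P_j} ∑_{e∈p} c_i(e). If each p_j is a shortest path with respect to the congestion just before routing j, then D_i ≤ D_{i-1} + α_i·μ/w, and hence (using D_i/α_i ≥ 1/(rw)) D_i ≤ D_{i-1}/(1-rμ). -/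
/-! Routing packet `j` along `p j` raises the total congestion by exactly `(μ/w)` times the
cost of `p j` just before routing it, so the window's increase telescopes to `μ/w` times the
sum of these costs. Congestion only grows during the window, so each greedy cost is at most the
cheapest path cost for packet `j` under the final congestion `c_i`; summing gives
`D_i ≤ D_{i-1} + α_i μ/w`. With `α_i ≤ r w D_i` this reads `(1 - rμ) D_i ≤ D_{i-1}`. -/

open Finset

section MultiplicativeRouting

variable {ι : Type*} [DecidableEq ι]

theorem sum_ite_mem_mul_one_add [Fintype ι] (f : ι → ℝ) (s : Finset ι) (a : ℝ) :
    ∑ e, (if e ∈ s then f e * (1 + a) else f e) = ∑ e, f e + a * ∑ e ∈ s, f e := by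
  have hsplit : ∀ e,
      (if e ∈ s then f e * (1 + a) else f e) = f e + if e ∈ s then a * f e else 0 := fun e => by
    split_ifs <;> ring
  simp only [hsplit, sum_add_distrib, sum_ite_mem, univ_inter, mul_sum]

def IsMultiplicativeRouting (a : ℝ) {N : ℕ} (p : Fin N → Finset ι) (c : ℕ → ι → ℝ) : Prop :=
  ∀ (j : Fin N) (e : ι), c (j + 1) e = if e ∈ p j then c j e * (1 + a) else c j e

variable {a : ℝ} {N : ℕ} {p : Fin N → Finset ι} {c : ℕ → ι → ℝ}

theorem congestion_le_succ (ha : 0 ≤ a) (hstep : IsMultiplicativeRouting a p c)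
    (j : Fin N) {e : ι} (hnn : 0 ≤ c j e) : c j e ≤ c (j + 1) e := by
  rw [hstep j e]
  split_ifs
  · nlinarith
  · rfl

theorem congestion_nonneg (ha : 0 ≤ a) (hstep : IsMultiplicativeRouting a p c)
    (h0 : ∀ e, 0 ≤ c 0 e) {n : ℕ} (hn : n ≤ N) (e : ι) : 0 ≤ c n e := by
  induction n with
  | zero => exact h0 e
  | succ k ih =>
    have ihk := ih (by omega)
    exact ihk.trans (congestion_le_succ ha hstep ⟨k, hn⟩ ihk)

theorem congestion_le_final (ha : 0 ≤ a) (hstep : IsMultiplicativeRouting a p c)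
    (h0 : ∀ e, 0 ≤ c 0 e) {n : ℕ} (hn : n ≤ N) (e : ι) : c n e ≤ c N e := by
  suffices h : ∀ k, n ≤ k → k ≤ N → c n e ≤ c k e from h N hn le_rfl
  intro k hnk
  induction k, hnk using Nat.le_induction with
  | base => exact fun _ => le_rfl
  | succ k _ ih =>
    intro hk
    exact (ih (by omega)).trans
      (congestion_le_succ ha hstep ⟨k, hk⟩ (congestion_nonneg ha hstep h0 (by omega) e))

theorem sum_congestion_final [Fintype ι] (hstep : IsMultiplicativeRouting a p c) :
    ∑ e, c N e = ∑ e, c 0 e + a * ∑ j : Fin N, ∑ e ∈ p j, c j e := by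
  have hinc : ∀ j : Fin N, ∑ e, c (j + 1) e - ∑ e, c j e = a * ∑ e ∈ p j, c j e := fun j => by
    simp only [hstep j, sum_ite_mem_mul_one_add]
    ring
  have htele := Finset.sum_range_sub (fun n => ∑ e, c n e) N
  rw [← Fin.sum_univ_eq_sum_range (fun j => ∑ e, c (j + 1) e - ∑ e, c j e)] at htele
  simp only [hinc, ← mul_sum] at htele
  linarith

theorem sum_routed_le_inf'_final (ha : 0 ≤ a) (hstep : IsMultiplicativeRouting a p c)
    (h0 : ∀ e, 0 ≤ c 0 e) {P : Fin N → Finset (Finset ι)} (hP : ∀ j, (P j).Nonempty)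
    (hshort : ∀ (j : Fin N), ∀ q ∈ P j, ∑ e ∈ p j, c j e ≤ ∑ e ∈ q, c j e) (j : Fin N) :
    ∑ e ∈ p j, c j e ≤ (P j).inf' (hP j) (fun q => ∑ e ∈ q, c N e) :=
  le_inf' _ _ fun q hq => (hshort j q hq).trans <|
    sum_le_sum fun e _ => congestion_le_final ha hstep h0 j.isLt.le e

end MultiplicativeRouting

theorem le_div_one_sub_of_le_add {D D' α w r μ : ℝ} (hw : 0 < w) (hμ : 0 ≤ μ)
    (hrμ : r * μ < 1) (hD : D ≤ D' + α * μ / w) (hα : α ≤ r * w * D) :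
    D ≤ D' / (1 - r * μ) := by
  have hαμ : α * μ / w ≤ r * μ * D := by
    rw [div_le_iff₀ hw]
    nlinarith
  rw [le_div_iff₀ (by linarith)]
  linarith

theorem stmt_7_general {Link : Type*} [Fintype Link] [DecidableEq Link]
    (w r μ : ℝ) (hw : 0 < w) (hμ : 0 < μ) (hrμ1 : r * μ < 1)
    (N : ℕ) (P : Fin N → Finset (Finset Link)) (hP : ∀ j, (P j).Nonempty)
    (p : Fin N → Finset Link)
    (c : ℕ → Link → ℝ)                       -- c j = congestion after routing the first j packets
    (hcnn : ∀ e, 0 ≤ c 0 e)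
    (hstep : ∀ (j : Fin N) (e : Link),
      c (j + 1) e = if e ∈ p j then c j e * (1 + μ / w) else c j e)
    (hshort : ∀ (j : Fin N), ∀ q ∈ P j, (∑ e ∈ p j, c j e) ≤ ∑ e ∈ q, c j e)
    (Dprev Di αi : ℝ)
    (hDprev : Dprev = ∑ e, c 0 e)
    (hDi : Di = ∑ e, c N e)
    (hαi : αi = ∑ j : Fin N, (P j).inf' (hP j) (fun q => ∑ e ∈ q, c N e)) :
    Di ≤ Dprev + αi * μ / w ∧ (αi ≤ r * w * Di → Di ≤ Dprev / (1 - r * μ)) := by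
  have hμw : 0 ≤ μ / w := (div_pos hμ hw).le
  have hgreedy : ∑ j : Fin N, ∑ e ∈ p j, c j e ≤ αi :=
    hαi ▸ sum_le_sum fun j _ => sum_routed_le_inf'_final hμw hstep hcnn hP hshort j
  have hmain : Di ≤ Dprev + αi * μ / w := by
    rw [hDi, hDprev, sum_congestion_final hstep, mul_div_assoc, mul_comm αi]
    gcongr
  exact ⟨hmain, le_div_one_sub_of_le_add hw hμ.le hrμ1 hmain⟩

/-- One window of the routing protocol: packets `0,…,N-1` are routed one by one, each along a
path that is shortest with respect to the congestion just before it is routed, and each routed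
path multiplies the congestion of its links by `(1+μ/w)`.  Then
`D_i ≤ D_{i-1} + α_i·μ/w`, and hence, if `D_i/α_i ≥ 1/(rw)`, `D_i ≤ D_{i-1}/(1-rμ)`. -/
theorem stmt_7 {Link : Type*} [Fintype Link] [DecidableEq Link]
    (w r μ : ℝ) (hw : 0 < w) (hμ : 0 < μ) (hrμ0 : 0 < r * μ) (hrμ1 : r * μ < 1)
    (N : ℕ) (P : Fin N → Finset (Finset Link)) (hP : ∀ j, (P j).Nonempty)
    (p : Fin N → Finset Link) (hpmem : ∀ j, p j ∈ P j)
    (c : ℕ → Link → ℝ)                       -- c j = congestion after routing the first j packets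
    (hcnn : ∀ e, 0 ≤ c 0 e)
    (hstep : ∀ (j : Fin N) (e : Link),
      c (j + 1) e = if e ∈ p j then c j e * (1 + μ / w) else c j e)
    (hshort : ∀ (j : Fin N), ∀ q ∈ P j, (∑ e ∈ p j, c j e) ≤ ∑ e ∈ q, c j e)
    (Dprev Di αi : ℝ)
    (hDprev : Dprev = ∑ e, c 0 e)
    (hDi : Di = ∑ e, c N e)
    (hαi : αi = ∑ j : Fin N, (P j).inf' (hP j) (fun q => ∑ e ∈ q, c N e)) :
    Di ≤ Dprev + αi * μ / w ∧ (αi ≤ r * w * Di → Di ≤ Dprev / (1 - r * μ)) :=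
  stmt_7_general w r μ hw hμ hrμ1 N P hP p c hcnn hstep hshort Dprev Di αi hDprev hDi hαi
end

section
/- In the batched-update routing protocol, where c_i(e) = c_{i-1}(e)·(1 + N_i(e)·μ/w) and N_i(e) = ∑_j [e ∈ p_j] counts packets routed through e in window i, it holds that D_i = D_{i-1} + (μ/w)·∑_j ∑_{e ∈ p_j} c_{i-1}(e) ≤ D_{i-1} + α_i·μ/w, where D_i = ∑_e c_i(e) and α_i = ∑_j min_{p ∈ P_j} ∑_{e∈p} c_i(e), provided each p_j is a shortest path with respect to c_{i-1} and c_{i-1}(e) ≤ c_i(e) for all e. -/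
/-- The batched-update routing protocol: at the end of a window, the congestion is updated by
`c_i(e) = c_{i-1}(e)·(1 + N_i(e)·μ/w)` where `N_i(e)` counts the packets routed through `e`.
Then `D_i = D_{i-1} + (μ/w)·∑_j ∑_{e∈p_j} c_{i-1}(e) ≤ D_{i-1} + α_i·μ/w`. -/
theorem stmt_8 {Link Packet : Type*} [Fintype Link] [Fintype Packet] [DecidableEq Link]
    (w μ : ℝ) (hw : 0 < w) (hμ : 0 < μ)
    (P : Packet → Finset (Finset Link)) (hP : ∀ j, (P j).Nonempty)
    (p : Packet → Finset Link) (hpmem : ∀ j, p j ∈ P j)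
    (cprev ci : Link → ℝ) (hcnn : ∀ e, 0 ≤ cprev e)
    (Nc : Link → ℕ)
    (hN : ∀ e, Nc e = (Finset.univ.filter (fun j : Packet => e ∈ p j)).card)
    (hupd : ∀ e, ci e = cprev e * (1 + (Nc e : ℝ) * μ / w))
    (hshort : ∀ j : Packet, ∀ q ∈ P j, (∑ e ∈ p j, cprev e) ≤ ∑ e ∈ q, cprev e)
    (hmono : ∀ e, cprev e ≤ ci e)
    (Dprev Di αi : ℝ)
    (hDprev : Dprev = ∑ e, cprev e)
    (hDi : Di = ∑ e, ci e)
    (hαi : αi = ∑ j : Packet, (P j).inf' (hP j) (fun q => ∑ e ∈ q, ci e)) :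
    Di = Dprev + μ / w * ∑ j : Packet, ∑ e ∈ p j, cprev e ∧
      Di ≤ Dprev + αi * μ / w := by
  have key : ∑ e, cprev e * (Nc e : ℝ) = ∑ j : Packet, ∑ e ∈ p j, cprev e := by
    have h1 : ∀ e : Link, cprev e * (Nc e : ℝ)
        = ∑ j : Packet, if e ∈ p j then cprev e else 0 := by
      intro e
      rw [hN e, Finset.card_filter]
      push_cast
      rw [Finset.mul_sum]
      simp [mul_ite]
    calc ∑ e, cprev e * (Nc e : ℝ)
        = ∑ e, ∑ j : Packet, if e ∈ p j then cprev e else 0 := by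
          exact Finset.sum_congr rfl fun e _ => h1 e
      _ = ∑ j : Packet, ∑ e, if e ∈ p j then cprev e else 0 := Finset.sum_comm
      _ = ∑ j : Packet, ∑ e ∈ p j, cprev e := by
          refine Finset.sum_congr rfl fun j _ => ?_
          simp [Finset.sum_ite_mem]
  have heq : Di = Dprev + μ / w * ∑ j : Packet, ∑ e ∈ p j, cprev e := by
    rw [hDi, hDprev, ← key, Finset.mul_sum, ← Finset.sum_add_distrib]
    refine Finset.sum_congr rfl fun e _ => ?_
    rw [hupd e]; ring
  refine ⟨heq, ?_⟩
  rw [heq, hαi]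
  have hμw : 0 ≤ μ / w := le_of_lt (div_pos hμ hw)
  have hbound : ∀ j : Packet,
      (∑ e ∈ p j, cprev e) ≤ (P j).inf' (hP j) (fun q => ∑ e ∈ q, ci e) := by
    intro j
    obtain ⟨q, hq, hqeq⟩ := Finset.exists_mem_eq_inf' (hP j) (fun q => ∑ e ∈ q, ci e)
    rw [hqeq]
    exact le_trans (hshort j q hq) (Finset.sum_le_sum fun e _ => hmono e)
  have hsum := Finset.sum_le_sum (fun j (_ : j ∈ Finset.univ) => hbound j)
  have h2 := mul_le_mul_of_nonneg_left hsum hμw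
  have h3 : (∑ j : Packet, (P j).inf' (hP j) fun q => ∑ e ∈ q, ci e) * μ / w
      = μ / w * ∑ j : Packet, (P j).inf' (hP j) fun q => ∑ e ∈ q, ci e := by ring
  rw [h3]
  linarith [h2]
end

section
/- In the deadline scheduling protocol where each packet p with path e_0,…,e_{d_p} has deadlines τ_k^p with τ_{k+1}^p = τ_k^p + T, each packet arrives at its initial link at least T steps before its first deadline, and links serve at each step the waiting packet with the smallest deadline: if for every link e and every time interval [t, t+T) the number of packet-deadlines assigned to e in [t,t+T) is at most T, then every packet meets all of its deadlines (packet p crosses link e_k by time τ_k^p). -/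
/-- The deadline-scheduling lemma: packets follow paths, the deadline at consecutive links on a
path increases by exactly `T`, each packet is available at its initial link at least `T` steps
before its first deadline, each link serves at most one packet per step and always a waiting
packet of smallest deadline (earliest-deadline-first).  If every link has at most `T` deadlines
in every length-`T` time interval, then every packet meets all of its deadlines. -/
theorem stmt_9 {Link Packet : Type*} [Fintype Packet] [DecidableEq Link] [DecidableEq Packet]
    (T : ℤ) (hT : 0 < T)
    (dmax : ℕ) (len : Packet → ℕ) (hlen : ∀ p, len p ≤ dmax)
    (path : Packet → ℕ → Link)          -- the k-th link on packet p's path, for k < len p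
    (τ : Packet → ℕ → ℤ)                -- deadline of packet p at its k-th link
    (cross : Packet → ℕ → ℤ)            -- time step at which p is served by its k-th link
    (arrive : Packet → ℕ → ℤ)           -- time from which p is waiting at its k-th link
    (hτ : ∀ p k, τ p (k + 1) = τ p k + T)
    (harr0 : ∀ p, 0 < len p → arrive p 0 ≤ τ p 0 - T)
    (harr : ∀ p k, k + 1 < len p → arrive p (k + 1) = cross p k + 1)
    (hwait : ∀ p k, k < len p → arrive p k ≤ cross p k)
    -- each link serves at most one packet per time step
    (hcap : ∀ (p q : Packet) (k l : ℕ), k < len p → l < len q →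
      path p k = path q l → cross p k = cross q l → p = q ∧ k = l)
    -- EDF: while a packet is waiting, the link is serving some packet with deadline no larger
    (hEDF : ∀ (p : Packet) (k : ℕ), k < len p → ∀ t : ℤ, arrive p k ≤ t → t < cross p k →
      ∃ (q : Packet) (l : ℕ), l < len q ∧ path q l = path p k ∧ cross q l = t ∧ τ q l ≤ τ p k)
    -- at most T deadlines per link per length-T interval
    (hload : ∀ (e : Link) (t : ℤ),
      (((Finset.univ ×ˢ Finset.range dmax).filter
          (fun pk : Packet × ℕ => pk.2 < len pk.1 ∧ path pk.1 pk.2 = e ∧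
            t ≤ τ pk.1 pk.2 ∧ τ pk.1 pk.2 < t + T)).card : ℤ) ≤ T) :
    ∀ (p : Packet) (k : ℕ), k < len p → cross p k ≤ τ p k := by
  classical
  by_contra hcon
  push_neg at hcon
  obtain ⟨p0, k0, hk0, hv0⟩ := hcon
  set V := (Finset.univ ×ˢ Finset.range dmax).filter
    (fun pk : Packet × ℕ => pk.2 < len pk.1 ∧ τ pk.1 pk.2 < cross pk.1 pk.2) with hV
  have hmemV : ∀ q l, l < len q → τ q l < cross q l → (q, l) ∈ V := by
    intro q l h1 h2
    simp only [hV, Finset.mem_filter, Finset.mem_product, Finset.mem_range, Finset.mem_univ,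
      true_and]
    exact ⟨lt_of_lt_of_le h1 (hlen q), h1, h2⟩
  obtain ⟨⟨p, k⟩, hpkV, hmin⟩ := V.exists_min_image (fun pk => τ pk.1 pk.2)
    ⟨(p0, k0), hmemV p0 k0 hk0 hv0⟩
  simp only [hV, Finset.mem_filter, Finset.mem_product, Finset.mem_range, Finset.mem_univ,
    true_and] at hpkV
  obtain ⟨hkd, hk, hviol⟩ := hpkV
  -- any packet with strictly smaller deadline meets its deadline
  have hgood : ∀ q l, l < len q → τ q l < τ p k → cross q l ≤ τ q l := by
    intro q l h1 h2
    by_contra h3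
    push_neg at h3
    exact absurd (hmin (q, l) (hmemV q l h1 h3)) (not_le.mpr h2)
  set t0 := τ p k - T + 1 with ht0
  -- p arrives at link k by time t0
  have hA : arrive p k ≤ t0 := by
    rcases k with _ | m
    · have := harr0 p hk
      omega
    · have hm : m < len p := Nat.lt_of_succ_lt hk
      have h1 : arrive p (m + 1) = cross p m + 1 := harr p m hk
      have h2 : τ p (m + 1) = τ p m + T := hτ p m
      have h3 : cross p m ≤ τ p m := hgood p m hm (by omega)
      omega
  let g : ℤ → Packet × ℕ := fun t =>
    if h : arrive p k ≤ t ∧ t < cross p k then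
      ⟨(hEDF p k hk t h.1 h.2).choose, (hEDF p k hk t h.1 h.2).choose_spec.choose⟩
    else (p, k)
  have hspec : ∀ t ∈ Finset.Icc t0 (τ p k),
      (g t).2 < len (g t).1 ∧ path (g t).1 (g t).2 = path p k ∧
      cross (g t).1 (g t).2 = t ∧ τ (g t).1 (g t).2 ≤ τ p k := by
    intro t ht
    rw [Finset.mem_Icc] at ht
    have hcnd : arrive p k ≤ t ∧ t < cross p k :=
      ⟨le_trans hA ht.1, lt_of_le_of_lt ht.2 hviol⟩
    simp only [g, dif_pos hcnd]
    exact (hEDF p k hk t hcnd.1 hcnd.2).choose_spec.choose_spec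
  set F := (Finset.univ ×ˢ Finset.range dmax).filter
    (fun pk : Packet × ℕ => pk.2 < len pk.1 ∧ path pk.1 pk.2 = path p k ∧
      t0 ≤ τ pk.1 pk.2 ∧ τ pk.1 pk.2 < t0 + T) with hF
  have hsub : insert (p, k) ((Finset.Icc t0 (τ p k)).image g) ⊆ F := by
    intro x hx
    rw [Finset.mem_insert] at hx
    rcases hx with rfl | hx
    · simp only [hF, Finset.mem_filter, Finset.mem_product, Finset.mem_range, Finset.mem_univ,
        true_and]
      exact ⟨hkd, hk, by omega, by omega⟩
    · obtain ⟨t, ht, rfl⟩ := Finset.mem_image.mp hx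
      obtain ⟨h1, h2, h3, h4⟩ := hspec t ht
      rw [Finset.mem_Icc] at ht
      have hlow : t0 ≤ τ (g t).1 (g t).2 := by
        rcases lt_or_ge (τ (g t).1 (g t).2) (τ p k) with hlt | hge
        · have := hgood (g t).1 (g t).2 h1 hlt
          omega
        · omega
      simp only [hF, Finset.mem_filter, Finset.mem_product, Finset.mem_range, Finset.mem_univ,
        true_and]
      exact ⟨lt_of_lt_of_le h1 (hlen _), h1, h2, hlow, by omega⟩
  have hninj : (p, k) ∉ (Finset.Icc t0 (τ p k)).image g := by
    intro hmem
    obtain ⟨t, ht, heq⟩ := Finset.mem_image.mp hmem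
    obtain ⟨-, -, h3, -⟩ := hspec t ht
    rw [Finset.mem_Icc] at ht
    rw [heq] at h3
    have h3' : cross p k = t := h3
    omega
  have hinj : Set.InjOn g (Finset.Icc t0 (τ p k)) := by
    intro t1 h1 t2 h2 heq
    obtain ⟨-, -, hc1, -⟩ := hspec t1 h1
    obtain ⟨-, -, hc2, -⟩ := hspec t2 h2
    rw [heq] at hc1
    omega
  have hcard1 : ((Finset.Icc t0 (τ p k)).image g).card = T.toNat := by
    rw [Finset.card_image_of_injOn hinj, Int.card_Icc]
    omega
  have hcard2 : T.toNat + 1 ≤ F.card := by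
    have h := Finset.card_le_card hsub
    rw [Finset.card_insert_of_notMem hninj, hcard1] at h
    omega
  have hload' := hload (path p k) t0
  rw [← hF] at hload'
  have : ((T.toNat : ℤ) + 1 : ℤ) ≤ (F.card : ℤ) := by exact_mod_cast hcard2
  omega
end

section
/- With W = ⌈(3/(rε²))·ln(nc/β)⌉ for 0 < β < 1, 0 < r < 1, ε = 1-r, and nc links in the ring with c parallel links on each of n positions, the uniformly random ring-choice routing satisfies Pr[max_{e∈E} X_e > (1+ε)rW] ≤ |E|·β/(nc) = β < 1, where X_e is the number of packets routed through link e in a W-interval and (w,r)-admissibility of injections guarantees E[X_e] ≤ rW with X_e a sum of independent Bernoulli(1/c) indicators over at most crW packets. -/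
/-!
Fix a link (i, j). Its load is the number of packets of the set S of packets crossing
position i that pick ring j, and admissibility says #S ≤ c·r·W. Counting colourings gives the
exponential moment exactly: ∑_ω (1+ε)^{load} = (c+ε)^{#S} c^{N-#S} ≤ e^{ε r W} c^N. Markov's
inequality at t = log(1+ε), together with log(1+ε) ≥ 2ε/(2+ε), yields the Chernoff bound
e^{-ε² r W/3}, and the choice of W makes this at most β/(nc). A union bound over the nc links
gives β.
-/

open MeasureTheory Finset

theorem card_filter_lt_mul_exp_le_sum_exp {β : Type*} [Fintype β] (f : β → ℝ) {t : ℝ}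
    (ht : 0 ≤ t) (a : ℝ) :
    #{ω | a < f ω} * Real.exp (t * a) ≤ ∑ ω, Real.exp (t * f ω) := by
  calc #{ω | a < f ω} * Real.exp (t * a) = ∑ ω with a < f ω, Real.exp (t * a) := by
        rw [sum_const, nsmul_eq_mul]
    _ ≤ ∑ ω with a < f ω, Real.exp (t * f ω) := sum_le_sum fun ω hω =>
        Real.exp_le_exp.2 (mul_le_mul_of_nonneg_left (mem_filter.1 hω).2.le ht)
    _ ≤ ∑ ω, Real.exp (t * f ω) :=
        sum_le_sum_of_subset_of_nonneg (subset_univ _) fun _ _ _ => (Real.exp_pos _).le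

theorem sub_one_add_mul_log_one_add_le {ε : ℝ} (h0 : 0 ≤ ε) (h1 : ε ≤ 1) :
    ε - (1 + ε) * Real.log (1 + ε) ≤ -(ε ^ 2 / 3) :=
  calc ε - (1 + ε) * Real.log (1 + ε) ≤ ε - (1 + ε) * (2 * ε / (ε + 2)) := by
        gcongr; exact Real.le_log_one_add_of_nonneg h0
    _ = -(ε ^ 2 / (ε + 2)) := by field_simp; ring
    _ ≤ -(ε ^ 2 / 3) := by gcongr; linarith

theorem add_pow_le_exp_mul_pow {c x : ℝ} (hc : 0 < c) (hx : 0 ≤ x) (m : ℕ) :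
    (c + x) ^ m ≤ Real.exp (m * x / c) * c ^ m := by
  have h : c + x ≤ Real.exp (x / c) * c := by
    have := Real.add_one_le_exp (x / c)
    calc c + x = (x / c + 1) * c := by field_simp; ring
      _ ≤ _ := by gcongr
  calc (c + x) ^ m ≤ (Real.exp (x / c) * c) ^ m := by gcongr
    _ = _ := by rw [mul_pow, ← Real.exp_nat_mul]; ring_nf

theorem PMF.toMeasure_uniformOfFintype_setOf {β : Type*} [Fintype β] [Nonempty β]
    [MeasurableSpace β] [MeasurableSingletonClass β] (P : β → Prop) [DecidablePred P] :
    (PMF.uniformOfFintype β).toMeasure {x | P x} = #{x | P x} / Fintype.card β := by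
  rw [← coe_filter_univ, PMF.toMeasure_apply_finset]
  simp [div_eq_mul_inv]

section Colouring

variable {α : Type*} [Fintype α] [DecidableEq α] {c : ℕ} (S : Finset α) (j : Fin c)

theorem sum_pow_card_filter_eq (y : ℝ) :
    ∑ ω : α → Fin c, y ^ #{p ∈ S | ω p = j} =
      (c - 1 + y) ^ #S * c ^ (Fintype.card α - #S) := by
  have hprod (ω : α → Fin c) : y ^ #{p ∈ S | ω p = j} =
      ∏ p, if p ∈ S then (if ω p = j then y else 1) else 1 := by
    rw [← prod_filter, ← prod_filter, filter_filter, prod_const]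
    congr 2
    ext p
    simp
  have hinner (p : α) : ∑ x : Fin c, (if p ∈ S then (if x = j then y else 1) else 1) =
      if p ∈ S then (c - 1 + y : ℝ) else c := by
    split_ifs
    · rw [sum_ite, sum_const, sum_const, filter_eq', filter_ne', card_erase_of_mem (mem_univ j)]
      simp [Nat.cast_sub (Fin.pos j)]
      ring
    · simp
  simp_rw [hprod]
  rw [← Fintype.prod_sum fun p (x : Fin c) => if p ∈ S then (if x = j then y else 1) else 1]
  simp_rw [hinner]
  rw [prod_ite, prod_const, prod_const]
  have hmem : ({x | x ∈ S} : Finset α) = S := by ext; simp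
  have hnotMem : ({x | x ∉ S} : Finset α) = Sᶜ := by ext; simp
  rw [hmem, hnotMem, card_compl]

theorem card_filter_lt_card_filter_eq_le {ε μ : ℝ} (hε0 : 0 ≤ ε) (hε1 : ε ≤ 1)
    (hS : (#S : ℝ) ≤ c * μ) :
    (#{ω : α → Fin c | (1 + ε) * μ < #{p ∈ S | ω p = j}} : ℝ) ≤
      Real.exp (-(ε ^ 2 * μ / 3)) * c ^ Fintype.card α := by
  have hc : (0 : ℝ) < c := Nat.cast_pos.2 (Fin.pos j)
  have hμ : 0 ≤ μ := nonneg_of_mul_nonneg_right ((Nat.cast_nonneg _).trans hS) hc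
  have hS' : #S ≤ Fintype.card α := card_le_univ S
  set t := Real.log (1 + ε)
  have hexp_t : Real.exp t = 1 + ε := Real.exp_log (by linarith)
  have ht : 0 ≤ t := Real.log_nonneg (by linarith)
  have hmgf : ∑ ω : α → Fin c, Real.exp (t * #{p ∈ S | ω p = j}) ≤
      Real.exp (ε * μ) * c ^ Fintype.card α := by
    calc ∑ ω : α → Fin c, Real.exp (t * #{p ∈ S | ω p = j})
        = ∑ ω : α → Fin c, (1 + ε) ^ #{p ∈ S | ω p = j} := by
          simp_rw [mul_comm t, Real.exp_nat_mul, hexp_t]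
      _ = (c + ε) ^ #S * c ^ (Fintype.card α - #S) := by
          rw [sum_pow_card_filter_eq]; ring_nf
      _ ≤ Real.exp (#S * ε / c) * c ^ #S * c ^ (Fintype.card α - #S) := by
          gcongr; exact add_pow_le_exp_mul_pow hc hε0 _
      _ ≤ Real.exp (ε * μ) * c ^ Fintype.card α := by
          rw [mul_assoc, ← pow_add, Nat.add_sub_cancel' hS']
          gcongr
          rw [div_le_iff₀ hc]
          nlinarith
  calc (#{ω : α → Fin c | (1 + ε) * μ < #{p ∈ S | ω p = j}} : ℝ)
      = #{ω : α → Fin c | (1 + ε) * μ < #{p ∈ S | ω p = j}} *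
          Real.exp (t * ((1 + ε) * μ)) * Real.exp (-(t * ((1 + ε) * μ))) := by
        rw [mul_assoc, ← Real.exp_add, add_neg_cancel, Real.exp_zero, mul_one]
    _ ≤ Real.exp (ε * μ) * c ^ Fintype.card α * Real.exp (-(t * ((1 + ε) * μ))) := by
        gcongr ?_ * _
        exact (card_filter_lt_mul_exp_le_sum_exp _ ht _).trans hmgf
    _ = Real.exp ((ε - (1 + ε) * t) * μ) * c ^ Fintype.card α := by
        rw [mul_right_comm, ← Real.exp_add]; ring_nf
    _ ≤ Real.exp (-(ε ^ 2 * μ / 3)) * c ^ Fintype.card α := by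
        gcongr
        nlinarith [sub_one_add_mul_log_one_add_le hε0 hε1]

theorem toMeasure_uniformOfFintype_lt_card_filter_eq_le [NeZero c] {ε μ : ℝ} (hε0 : 0 ≤ ε)
    (hε1 : ε ≤ 1) (hS : (#S : ℝ) ≤ c * μ) :
    (PMF.uniformOfFintype (α → Fin c)).toMeasure {ω | (1 + ε) * μ < #{p ∈ S | ω p = j}} ≤
      ENNReal.ofReal (Real.exp (-(ε ^ 2 * μ / 3))) := by
  rw [PMF.toMeasure_uniformOfFintype_setOf (β := α → Fin c), Fintype.card_fun, Fintype.card_fin]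
  apply ENNReal.div_le_of_le_mul
  rw [← ENNReal.ofReal_natCast, ← ENNReal.ofReal_natCast,
    ← ENNReal.ofReal_mul (Real.exp_pos _).le]
  apply ENNReal.ofReal_le_ofReal
  push_cast
  exact card_filter_lt_card_filter_eq_le S j hε0 hε1 hS

end Colouring

theorem stmt_13_general (n c : ℕ) [NeZero c]
    {Pkt : Type*} [Fintype Pkt] [DecidableEq Pkt]
    (crosses : Pkt → Finset (Fin n))   -- positions of the ring crossed by each packet
    (r ε β : ℝ) (hr0 : 0 < r) (hr1 : r < 1) (hε : ε = 1 - r) (hβ0 : 0 < β)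
    (W : ℕ) (hW : W = ⌈3 / (r * ε ^ 2) * Real.log ((n : ℝ) * c / β)⌉₊)
    -- (w,r)-admissibility: at most c·r·W packets of the W-interval cross any position
    (hadm : ∀ i : Fin n,
      ((Finset.univ.filter (fun p : Pkt => i ∈ crosses p)).card : ℝ) ≤ (c : ℝ) * (r * W))
    (X : Fin n × Fin c → (Pkt → Fin c) → ℕ)
    -- X e ω = number of packets routed through link e = (position, ring label) under choice ω
    (hX : ∀ (e : Fin n × Fin c) (ω : Pkt → Fin c),
      X e ω = (Finset.univ.filter (fun p : Pkt => e.1 ∈ crosses p ∧ ω p = e.2)).card) :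
    (PMF.uniformOfFintype (Pkt → Fin c)).toMeasure
        {ω | ∃ e : Fin n × Fin c, (1 + ε) * r * W < (X e ω : ℝ)} ≤
      ENNReal.ofReal β := by
  obtain rfl | hn := n.eq_zero_or_pos
  · simp
  have hε0 : 0 < ε := by linarith
  have hnc : (0 : ℝ) < n * c := mul_pos (Nat.cast_pos.2 hn) (Nat.cast_pos.2 (NeZero.pos c))
  have hlog : Real.log (n * c / β) ≤ ε ^ 2 * (r * W) / 3 := by
    have := hW ▸ Nat.le_ceil (3 / (r * ε ^ 2) * Real.log ((n : ℝ) * c / β))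
    rw [div_mul_eq_mul_div, div_le_iff₀ (by positivity)] at this
    linarith
  have hlink (e : Fin n × Fin c) :
      (PMF.uniformOfFintype (Pkt → Fin c)).toMeasure {ω | (1 + ε) * r * W < (X e ω : ℝ)} ≤
        ENNReal.ofReal (β / (n * c)) := by
    simp_rw [hX, ← filter_filter, mul_assoc (1 + ε)]
    refine (toMeasure_uniformOfFintype_lt_card_filter_eq_le _ e.2 hε0.le (by linarith)
      (hadm e.1)).trans (ENNReal.ofReal_le_ofReal ?_)
    calc Real.exp (-(ε ^ 2 * (r * W) / 3)) ≤ Real.exp (-Real.log (n * c / β)) := by gcongr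
      _ = β / (n * c) := by rw [Real.exp_neg, Real.exp_log (by positivity), inv_div]
  calc (PMF.uniformOfFintype (Pkt → Fin c)).toMeasure
        {ω | ∃ e : Fin n × Fin c, (1 + ε) * r * W < (X e ω : ℝ)}
      = (PMF.uniformOfFintype (Pkt → Fin c)).toMeasure
          (⋃ e : Fin n × Fin c, {ω | (1 + ε) * r * W < (X e ω : ℝ)}) := by
        rw [Set.ofPred_exists]
    _ ≤ ∑ e : Fin n × Fin c, ENNReal.ofReal (β / (n * c)) :=
        (measure_iUnion_fintype_le _ _).trans (sum_le_sum fun e _ => hlink e)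
    _ = ENNReal.ofReal β := by
        rw [sum_const, card_univ, Fintype.card_prod, Fintype.card_fin, Fintype.card_fin,
          nsmul_eq_mul, ← ENNReal.ofReal_natCast, ← ENNReal.ofReal_mul (by positivity)]
        push_cast
        rw [mul_div_cancel₀ _ hnc.ne']

/-- Randomized ring routing: on a ring with `n` positions and `c` parallel links at each
position, each packet independently and uniformly chooses one of the `c` single rings.  With
`W = ⌈(3/(rε²))·ln(nc/β)⌉`, the probability that some link of the ring has more than
`(1+ε)rW` packets routed through it during a `W`-interval is at most `β < 1`. -/
theorem stmt_13 (n c : ℕ) (hn : 0 < n) (hc : 0 < c) [NeZero c]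
    {Pkt : Type*} [Fintype Pkt] [DecidableEq Pkt]
    (crosses : Pkt → Finset (Fin n))   -- positions of the ring crossed by each packet
    (r ε β : ℝ) (hr0 : 0 < r) (hr1 : r < 1) (hε : ε = 1 - r) (hβ0 : 0 < β) (hβ1 : β < 1)
    (W : ℕ) (hW : W = ⌈3 / (r * ε ^ 2) * Real.log ((n : ℝ) * c / β)⌉₊)
    -- (w,r)-admissibility: at most c·r·W packets of the W-interval cross any position
    (hadm : ∀ i : Fin n,
      ((Finset.univ.filter (fun p : Pkt => i ∈ crosses p)).card : ℝ) ≤ (c : ℝ) * (r * W))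
    (X : Fin n × Fin c → (Pkt → Fin c) → ℕ)
    -- X e ω = number of packets routed through link e = (position, ring label) under choice ω
    (hX : ∀ (e : Fin n × Fin c) (ω : Pkt → Fin c),
      X e ω = (Finset.univ.filter (fun p : Pkt => e.1 ∈ crosses p ∧ ω p = e.2)).card) :
    (PMF.uniformOfFintype (Pkt → Fin c)).toMeasure
        {ω | ∃ e : Fin n × Fin c, (1 + ε) * r * W < (X e ω : ℝ)} ≤
      ENNReal.ofReal β :=
  stmt_13_general n c crosses r ε β hr0 hr1 hε hβ0 W hW hadm X hX
end
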